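/- arXiv:2205.01496 — 2 statements merged into one kernel-verified Lean document; each statement's English description precedes it below -/
import Mathlib

section
/- For β > λ₁ and ε > 0, let f_{β,ε}(u) = ∫_Ω |Du|² dx - 2∫_Ω G_{β,ε}(u) dx. If ū ∈ H¹₀(Ω) satisfies ∫(ū⁺)² = ∫(ū⁻)² = 1 and ∫|Dū⁺|² < β, then lim_{t→+∞} t⁻² f_{β,ε}(tū⁺) = ∫|Dū⁺|² - β∫(ū⁺)² < 0 and lim_{t→0⁺} t⁻² f_{β,ε}(tū⁺) = ∫|Dū⁺|² > 0; consequently there exists t̄ > 0 maximizing t ↦ f_{β,ε}(-ū⁻ + tū⁺) over t ≥ 0, and -ū⁻ + t̄ū⁺ ∈ M^{β,ε}. -/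
open MeasureTheory Filter Set
open scoped RealInnerProductSpace ENNReal Topology

noncomputable section

abbrev Euc (N : ℕ) := EuclideanSpace ℝ (Fin N)

variable {N : ℕ}

/-- positive part of a function -/
def pPart (u : Euc N → ℝ) : Euc N → ℝ := fun x => max (u x) 0

/-- negative part of a function -/
def nPart (u : Euc N → ℝ) : Euc N → ℝ := fun x => max (-u x) 0

/-- Dirichlet energy `∫_Ω |Du|²` -/
def dirE (Ω : Set (Euc N)) (u : Euc N → ℝ) : ℝ := ∫ x in Ω, ‖gradient u x‖ ^ 2

/-- squared `L²(Ω)` norm -/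
def l2sq (Ω : Set (Euc N)) (u : Euc N → ℝ) : ℝ := ∫ x in Ω, (u x) ^ 2

/-- a model of membership in `H¹₀(Ω)` -/
def MemH10 (Ω : Set (Euc N)) (u : Euc N → ℝ) : Prop :=
  (∀ x ∉ Ω, u x = 0) ∧ MemLp u 2 (volume.restrict Ω) ∧
    MemLp (fun x => gradient u x) 2 (volume.restrict Ω)

/-- `u` is nontrivial in `Ω` -/
def Nontriv (Ω : Set (Euc N)) (u : Euc N → ℝ) : Prop :=
  ¬ u =ᵐ[volume.restrict Ω] (fun _ => (0 : ℝ))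

/-- weak solution of `Δu - α u⁻ + β u⁺ = 0` in `Ω` -/
def IsWeakSol (Ω : Set (Euc N)) (α β : ℝ) (u : Euc N → ℝ) : Prop :=
  ∀ ψ : Euc N → ℝ, MemH10 Ω ψ →
    ∫ x in Ω, ⟪gradient u x, gradient ψ x⟫
      = β * ∫ x in Ω, pPart u x * ψ x - α * ∫ x in Ω, nPart u x * ψ x

/-- the Fučík spectrum of `Ω` -/
def fucik (Ω : Set (Euc N)) : Set (ℝ × ℝ) :=
  {p | ∃ u, MemH10 Ω u ∧ Nontriv Ω u ∧ IsWeakSol Ω p.1 p.2 u}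

/-- weak eigenfunction of `-Δ` on `H¹₀(Ω)` -/
def IsEigenfun (Ω : Set (Euc N)) (μ : ℝ) (u : Euc N → ℝ) : Prop :=
  ∀ ψ : Euc N → ℝ, MemH10 Ω ψ →
    ∫ x in Ω, ⟪gradient u x, gradient ψ x⟫ = μ * ∫ x in Ω, u x * ψ x

/-- `μ` is an eigenvalue of `-Δ` on `H¹₀(Ω)` -/
def IsEigenvalue (Ω : Set (Euc N)) (μ : ℝ) : Prop :=
  ∃ u, MemH10 Ω u ∧ Nontriv Ω u ∧ IsEigenfun Ω μ u

/-- `lam1` is the first Dirichlet eigenvalue, simple, with positive normalized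
eigenfunction `e1` -/
def IsFirstEigen (Ω : Set (Euc N)) (lam1 : ℝ) (e1 : Euc N → ℝ) : Prop :=
  MemH10 Ω e1 ∧ (∀ x ∈ Ω, 0 < e1 x) ∧ l2sq Ω e1 = 1 ∧ IsEigenfun Ω lam1 e1 ∧
    (∀ u, MemH10 Ω u → lam1 * l2sq Ω u ≤ dirE Ω u) ∧
    (∀ u, MemH10 Ω u → dirE Ω u = lam1 * l2sq Ω u → ∃ c : ℝ, u = fun x => c * e1 x)

/-- the truncated nonlinearity `g_{β,ε}` -/
def gfun (β ε τ : ℝ) : ℝ := β * max (τ - ε) 0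

/-- its primitive `G_{β,ε}` -/
def Gfun (β ε t : ℝ) : ℝ := (β / 2) * (max (t - ε) 0) ^ 2

/-- the functional `f_{β,ε}` -/
def ffun (Ω : Set (Euc N)) (β ε : ℝ) (u : Euc N → ℝ) : ℝ :=
  dirE Ω u - 2 * ∫ x in Ω, Gfun β ε (u x)

/-- the pairing `f'_{β,ε}(u)[v]` -/
def fSlope (Ω : Set (Euc N)) (β ε : ℝ) (u v : Euc N → ℝ) : ℝ :=
  2 * ∫ x in Ω, ⟪gradient u x, gradient v x⟫ - 2 * ∫ x in Ω, gfun β ε (u x) * v x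

/-- the constraint set `M^{β,ε}` -/
def Mset (Ω : Set (Euc N)) (β ε : ℝ) : Set (Euc N → ℝ) :=
  {u | MemH10 Ω u ∧ l2sq Ω (nPart u) = 1 ∧ Nontriv Ω (pPart u) ∧
    dirE Ω (pPart u) = ∫ x in Ω, gfun β ε (pPart u x) * pPart u x}

/-- the constraint set for the minimization defining `α_β` -/
def Kset (Ω : Set (Euc N)) (β : ℝ) : Set (Euc N → ℝ) :=
  {u | MemH10 Ω u ∧ l2sq Ω (pPart u) = 1 ∧ l2sq Ω (nPart u) = 1 ∧
    dirE Ω (pPart u) = β}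

/-- the value `α_β` of the first nontrivial curve -/
def alphaB (Ω : Set (Euc N)) (β : ℝ) : ℝ :=
  sInf ((fun u => dirE Ω (nPart u)) '' Kset Ω β)

/-!
Along the ray `t ↦ t ū⁺` the functional is `t² ∫|Dū⁺|² - 2 ∫ G(t ū⁺)`. Since `|G(s)| ≤ |β| s² / 2`,
`G(s) = 0` for `s ≤ ε` and `G(t y) / t² → β y² / 2` as `t → ∞` for `y ≥ 0`, dominated convergence
gives both limits of `t⁻² f(t ū⁺)`. If `∫|Dū⁺|²` vanished, `λ₁` would be `0` and `ū⁺` a multiple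
of the positive eigenfunction, so `ū⁻ = 0` on `Ω`. Hence `t ↦ f(t ū⁺)` is positive for small
`t > 0` and tends to `-∞`: it has a maximiser `t̄ > 0`, where its derivative
`2 t̄ ∫|Dū⁺|² - 2 ∫ g(t̄ ū⁺) ū⁺` vanishes, which is the constraint defining `M^{β,ε}`.

Gradients are pointwise Fréchet gradients, so `D(-ū⁻ + t ū⁺) = -Dū⁻ + t Dū⁺` only holds almost
everywhere: off the zero set of `ū` it is local, and at a Lebesgue density point of the zero set of
a function its derivative vanishes, because there the zero set is tangent to every direction. As
`Dū⁺` and `Dū⁻` have disjoint supports, `f(-ū⁻ + t ū⁺) = f(t ū⁺) + ∫|Dū⁻|²`, so `t̄` also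
maximises `t ↦ f(-ū⁻ + t ū⁺)`.
-/

open scoped Pointwise

section DensityPoint

variable {E F : Type*} [NormedAddCommGroup E] [NormedSpace ℝ E] [FiniteDimensional ℝ E]
  [MeasurableSpace E] [BorelSpace E] [NormedAddCommGroup F] [NormedSpace ℝ F]

theorem tangentConeAt_eq_univ_of_tendsto_density (μ : Measure E) [μ.IsAddHaarMeasure]
    {s : Set E} {x : E}
    (h : Tendsto (fun r => μ (s ∩ Metric.closedBall x r) / μ (Metric.closedBall x r))
      (𝓝[>] 0) (𝓝 1)) :
    tangentConeAt ℝ s x = univ := by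
  refine eq_univ_of_forall fun z => ?_
  simp only [tangentConeAt_eq_biInter_closure, mem_iInter₂, Metric.mem_closure_iff]
  intro U hU δ hδ
  have hball : ∀ᶠ r in 𝓝[>] (0 : ℝ), (s ∩ ({x} + r • Metric.closedBall z (δ / 2))).Nonempty :=
    Measure.eventually_nonempty_inter_smul_of_density_one μ s x h _
      Metric.isClosed_closedBall.measurableSet (Metric.measure_closedBall_pos μ z (half_pos hδ)).ne'
  have hsmall : ∀ᶠ r in 𝓝[>] (0 : ℝ), {0} + r • Metric.closedBall z (δ / 2) ⊆ U :=
    nhdsWithin_le_nhds (eventually_singleton_add_smul_subset Metric.isBounded_closedBall hU)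
  obtain ⟨r, ⟨y, hys, hy⟩, hrU, hr⟩ :=
    (hball.and (hsmall.and self_mem_nhdsWithin)).exists
  obtain ⟨a, ha, hay⟩ : ∃ a ∈ Metric.closedBall z (δ / 2), r • a = -x + y := by
    simpa [mem_smul_set, singleton_add] using hy
  refine ⟨a, ⟨r⁻¹, mem_univ _, r • a, ⟨hrU (by simpa using smul_mem_smul_set ha),
    by rwa [mem_preimage, hay, add_neg_cancel_left]⟩, inv_smul_smul₀ hr.ne' a⟩, ?_⟩
  rw [dist_comm]
  exact (Metric.mem_closedBall.1 ha).trans_lt (half_lt_self hδ)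

theorem ae_fderiv_eq_zero_of_eqOn_zero (μ : Measure E) [μ.IsAddHaarMeasure] {s : Set E}
    {f : E → F} (hf : EqOn f 0 s) : ∀ᵐ x ∂μ, x ∈ s → fderiv ℝ f x = 0 := by
  filter_upwards [ae_imp_of_ae_restrict (Besicovitch.ae_tendsto_measure_inter_div μ s)]
    with x hx hxs
  by_cases hd : DifferentiableAt ℝ f x
  · have hunique : UniqueDiffWithinAt ℝ s x :=
      ⟨by simp [tangentConeAt_eq_univ_of_tendsto_density μ (hx hxs)], subset_closure hxs⟩
    exact hunique.eq hd.hasFDerivAt.hasFDerivWithinAt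
      ((hasFDerivWithinAt_const 0 x s).congr hf (hf hxs))
  · exact fderiv_zero_of_not_differentiableAt hd

end DensityPoint

section Gradient

variable {F : Type*} [NormedAddCommGroup F] [InnerProductSpace ℝ F] [CompleteSpace F]

theorem gradient_const_smul_apply (c : ℝ) (f : F → ℝ) (x : F) :
    gradient (c • f) x = c • gradient f x := by
  simp [gradient, fderiv_const_smul_field]

theorem gradient_neg_apply (f : F → ℝ) (x : F) : gradient (-f) x = -gradient f x := by
  simp [gradient, fderiv_neg]

theorem IsLocalMin.gradient_eq_zero {f : F → ℝ} {x : F} (h : IsLocalMin f x) :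
    gradient f x = 0 := by
  simp [gradient, h.fderiv_eq_zero]

theorem measurable_gradient [MeasurableSpace F] [BorelSpace F]
    (f : F → ℝ) : Measurable (gradient f) :=
  (InnerProductSpace.toDual ℝ F).symm.continuous.measurable.comp (measurable_fderiv ℝ f)

end Gradient

theorem nPart_eq_pPart_neg (v : Euc N → ℝ) : nPart v = pPart (-v) := rfl

theorem pPart_nonneg (v : Euc N → ℝ) (x : Euc N) : 0 ≤ pPart v x := le_max_right _ _

theorem pPart_sub_nPart (v : Euc N → ℝ) : pPart v - nPart v = v := by
  ext x
  simp only [Pi.sub_apply, pPart, nPart]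
  rcases le_total (v x) 0 with h | h <;> simp [h]

theorem pPart_eventuallyEq {v : Euc N → ℝ} {x : Euc N} (h : ∀ᶠ y in 𝓝 x, 0 < v y) :
    pPart v =ᶠ[𝓝 x] v := by
  filter_upwards [h] with y hy using max_eq_left hy.le

theorem gradient_pPart (v : Euc N → ℝ) (x : Euc N) :
    gradient (pPart v) x = if 0 < v x then gradient v x else 0 := by
  split_ifs with hx
  · by_cases hv : DifferentiableAt ℝ v x
    · exact (pPart_eventuallyEq (hv.continuousAt.eventually (lt_mem_nhds hx))).gradient_eq
    · -- if `v⁺` were differentiable at `x`, it would be positive, hence equal to `v`, near `x`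
      have hp : ¬ DifferentiableAt ℝ (pPart v) x := fun hp => hv <|
        (pPart_eventuallyEq ((hp.continuousAt.eventually (lt_mem_nhds (lt_max_of_lt_left hx))).mono
          fun y hy => by simpa [pPart] using hy)).differentiableAt_iff.1 hp
      rw [gradient_eq_zero_of_not_differentiableAt hv,
        gradient_eq_zero_of_not_differentiableAt hp]
  · refine IsLocalMin.gradient_eq_zero (Eventually.of_forall fun y => ?_)
    simp only [pPart, max_eq_right (not_lt.1 hx), le_max_right]

theorem gradient_nPart (v : Euc N → ℝ) (x : Euc N) :
    gradient (nPart v) x = if v x < 0 then -gradient v x else 0 := by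
  simp [nPart_eq_pPart_neg, gradient_pPart, gradient_neg_apply]

theorem norm_gradient_pPart_le (v : Euc N → ℝ) (x : Euc N) :
    ‖gradient (pPart v) x‖ ≤ ‖gradient v x‖ := by
  rw [gradient_pPart]; split_ifs <;> simp

theorem norm_gradient_nPart_le (v : Euc N → ℝ) (x : Euc N) :
    ‖gradient (nPart v) x‖ ≤ ‖gradient v x‖ := by
  rw [gradient_nPart]; split_ifs <;> simp

theorem gradient_pPart_eq_zero_or_gradient_nPart_eq_zero (v : Euc N → ℝ) (x : Euc N) :
    gradient (pPart v) x = 0 ∨ gradient (nPart v) x = 0 := by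
  rw [gradient_pPart, gradient_nPart]
  by_cases h : 0 < v x
  · simp [h.not_gt]
  · simp [h]

theorem ae_gradient_eq_zero_of_eq_zero (v : Euc N → ℝ) :
    ∀ᵐ x, v x = 0 → gradient v x = 0 := by
  filter_upwards [ae_fderiv_eq_zero_of_eqOn_zero volume (s := {x | v x = 0})
    (f := v) fun x hx => hx] with x hx hvx
  simp [gradient, hx hvx]

theorem ae_gradient_eq_gradient_pPart_sub_gradient_nPart (v : Euc N → ℝ) :
    ∀ᵐ x, gradient v x = gradient (pPart v) x - gradient (nPart v) x := by
  filter_upwards [ae_gradient_eq_zero_of_eq_zero v] with x hx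
  rw [gradient_pPart, gradient_nPart]
  rcases lt_trichotomy (v x) 0 with h | h | h
  · simp [h, h.not_gt]
  · simp [h, hx h]
  · simp [h, h.not_gt]

theorem ae_norm_gradient_sq (v : Euc N → ℝ) :
    ∀ᵐ x, ‖gradient v x‖ ^ 2 =
      ‖gradient (pPart v) x‖ ^ 2 + ‖gradient (nPart v) x‖ ^ 2 := by
  filter_upwards [ae_gradient_eq_gradient_pPart_sub_gradient_nPart v] with x hx
  rcases gradient_pPart_eq_zero_or_gradient_nPart_eq_zero v x with h | h <;> simp [hx, h]

section Sobolev

variable {Ω : Set (Euc N)}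

theorem MemH10.pPart {v : Euc N → ℝ} (hv : MemH10 Ω v) : MemH10 Ω (pPart v) :=
  ⟨fun x hx => by rw [_root_.pPart, hv.1 x hx, max_self], hv.2.1.pos_part,
    hv.2.2.of_le (measurable_gradient _).aestronglyMeasurable
      (ae_of_all _ fun x => norm_gradient_pPart_le v x)⟩

theorem MemH10.nPart {v : Euc N → ℝ} (hv : MemH10 Ω v) : MemH10 Ω (nPart v) :=
  ⟨fun x hx => by rw [_root_.nPart, hv.1 x hx, neg_zero, max_self], hv.2.1.neg_part,
    hv.2.2.of_le (measurable_gradient _).aestronglyMeasurable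
      (ae_of_all _ fun x => norm_gradient_nPart_le v x)⟩

theorem MemH10.const_smul {v : Euc N → ℝ} (hv : MemH10 Ω v) (c : ℝ) : MemH10 Ω (c • v) :=
  ⟨fun x hx => by simp [hv.1 x hx], hv.2.1.const_smul c, by
    rw [show (fun x => gradient (c • v) x) = c • fun x => gradient v x from
      funext (gradient_const_smul_apply c v)]
    exact hv.2.2.const_smul c⟩

theorem memH10_of_pPart_of_nPart {v : Euc N → ℝ} (hp : MemH10 Ω (pPart v))
    (hn : MemH10 Ω (nPart v)) : MemH10 Ω v := by
  refine ⟨fun x hx => ?_, ?_, ?_⟩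
  · rw [← pPart_sub_nPart v]
    simp [hp.1 x hx, hn.1 x hx]
  · rw [← pPart_sub_nPart v]
    exact hp.2.1.sub hn.2.1
  · exact (hp.2.2.sub hn.2.2).ae_eq <| ae_restrict_of_ae <|
    (ae_gradient_eq_gradient_pPart_sub_gradient_nPart v).mono fun x hx => hx.symm

theorem dirE_nonneg (Ω : Set (Euc N)) (v : Euc N → ℝ) : 0 ≤ dirE Ω v :=
  integral_nonneg fun _ => sq_nonneg _

theorem l2sq_nonneg (Ω : Set (Euc N)) (v : Euc N → ℝ) : 0 ≤ l2sq Ω v :=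
  integral_nonneg fun _ => sq_nonneg _

theorem dirE_const_smul (Ω : Set (Euc N)) (c : ℝ) (v : Euc N → ℝ) :
    dirE Ω (c • v) = c ^ 2 * dirE Ω v := by
  simp only [dirE, gradient_const_smul_apply, norm_smul, mul_pow, Real.norm_eq_abs, sq_abs,
    integral_const_mul]

theorem dirE_eq_dirE_pPart_add_dirE_nPart {v : Euc N → ℝ} (hp : MemH10 Ω (pPart v))
    (hn : MemH10 Ω (nPart v)) : dirE Ω v = dirE Ω (pPart v) + dirE Ω (nPart v) := by
  rw [dirE, dirE, dirE, ← integral_add hp.2.2.norm.integrable_sq hn.2.2.norm.integrable_sq]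
  exact integral_congr_ae (ae_restrict_of_ae (ae_norm_gradient_sq v))

theorem nontriv_of_l2sq_ne_zero {v : Euc N → ℝ} (hv : l2sq Ω v ≠ 0) : Nontriv Ω v :=
  fun h0 => hv (integral_eq_zero_of_ae (h0.mono fun x hx => by simp [hx]))

end Sobolev

section Nonlinearity

variable {β ε : ℝ}

theorem continuous_gfun (β ε : ℝ) : Continuous (gfun β ε) := by
  unfold gfun; fun_prop

theorem continuous_Gfun (β ε : ℝ) : Continuous (Gfun β ε) := by
  unfold Gfun; fun_prop

theorem Gfun_eq_zero {y : ℝ} (h : y ≤ ε) : Gfun β ε y = 0 := by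
  simp [Gfun, h]

theorem Gfun_max_zero (hε : 0 ≤ ε) (y : ℝ) : Gfun β ε (max y 0) = Gfun β ε y := by
  rcases le_total y 0 with h | h
  · rw [max_eq_right h, Gfun_eq_zero hε, Gfun_eq_zero (h.trans hε)]
  · rw [max_eq_left h]

theorem hasDerivAt_Gfun (β ε y : ℝ) : HasDerivAt (Gfun β ε) (gfun β ε y) y := by
  refine hasDerivAt_of_hasDerivAt_of_ne' (x := ε) (fun y hy => ?_)
    (continuous_Gfun β ε).continuousAt (continuous_gfun β ε).continuousAt y
  rcases hy.lt_or_gt with hy | hy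
  · rw [show gfun β ε y = 0 by simp [gfun, hy.le]]
    exact (hasDerivAt_const y 0).congr_of_eventuallyEq
      (eventually_lt_nhds hy |>.mono fun s hs => Gfun_eq_zero hs.le)
  · have hd := (((hasDerivAt_id' y).sub_const ε).fun_pow 2).const_mul (β / 2)
    convert hd.congr_of_eventuallyEq (f₁ := Gfun β ε)
      (eventually_gt_nhds hy |>.mono fun s hs => by simp [Gfun, hs.le]) using 1
    simp [gfun, hy.le]
    ring

theorem abs_gfun_le (hε : 0 ≤ ε) (y : ℝ) : |gfun β ε y| ≤ |β| * |y| := by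
  rw [gfun, abs_mul, abs_of_nonneg (le_max_right (y - ε) 0)]
  exact mul_le_mul_of_nonneg_left (max_le (by linarith [le_abs_self y]) (abs_nonneg y))
    (abs_nonneg β)

theorem abs_Gfun_le (hε : 0 ≤ ε) (y : ℝ) : |Gfun β ε y| ≤ |β| / 2 * y ^ 2 := by
  have h : max (y - ε) 0 ≤ |y| := max_le (by linarith [le_abs_self y]) (abs_nonneg y)
  rw [Gfun, abs_mul, abs_div, abs_two, abs_of_nonneg (sq_nonneg (max (y - ε) 0)), ← sq_abs y]
  exact mul_le_mul_of_nonneg_left (pow_le_pow_left₀ (le_max_right _ _) h 2) (by positivity)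

theorem abs_Gfun_mul_div_sq_le (hε : 0 ≤ ε) (t y : ℝ) :
    |Gfun β ε (t * y) / t ^ 2| ≤ |β| / 2 * y ^ 2 := by
  rcases eq_or_ne t 0 with rfl | ht
  · simp; positivity
  rw [abs_div, abs_of_nonneg (sq_nonneg t), div_le_iff₀ (by positivity)]
  calc |Gfun β ε (t * y)| ≤ |β| / 2 * (t * y) ^ 2 := abs_Gfun_le hε _
    _ = |β| / 2 * y ^ 2 * t ^ 2 := by ring

theorem tendsto_Gfun_mul_div_sq_atTop {y : ℝ} (hy : 0 ≤ y) :
    Tendsto (fun t => Gfun β ε (t * y) / t ^ 2) atTop (𝓝 (β / 2 * y ^ 2)) := by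
  have hlim : Tendsto (fun t => β / 2 * max (y - ε / t) 0 ^ 2) atTop
      (𝓝 (β / 2 * max (y - 0) 0 ^ 2)) :=
    ((continuous_const.mul ((continuous_id.max continuous_const).pow 2)).tendsto _).comp
      (tendsto_const_nhds.sub (tendsto_const_nhds.div_atTop tendsto_id))
  rw [sub_zero, max_eq_left hy] at hlim
  refine hlim.congr' ((eventually_gt_atTop 0).mono fun t ht => ?_)
  have hmax : max (t * y - ε) 0 = t * max (y - ε / t) 0 := by
    rw [mul_max_of_nonneg _ _ ht.le, mul_zero, mul_sub, mul_div_cancel₀ _ ht.ne']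
  dsimp only
  rw [Gfun, hmax, eq_div_iff (by positivity)]
  ring

theorem Gfun_mul_eventually_eq_zero (hε : 0 < ε) (y : ℝ) :
    ∀ᶠ t in 𝓝 0, Gfun β ε (t * y) = 0 := by
  have h : Tendsto (fun t : ℝ => t * y) (𝓝 0) (𝓝 0) := by
    simpa using (tendsto_id (x := 𝓝 (0 : ℝ))).mul_const y
  exact (h.eventually (eventually_le_nhds hε)).mono fun t ht => Gfun_eq_zero ht

end Nonlinearity

section IntegralOfPrimitive

variable {α : Type*} [MeasurableSpace α] {μ : Measure α} {v : α → ℝ} {β ε : ℝ}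

theorem aestronglyMeasurable_Gfun_mul (hv : MemLp v 2 μ) (t : ℝ) :
    AEStronglyMeasurable (fun x => Gfun β ε (t * v x)) μ :=
  (continuous_Gfun β ε).comp_aestronglyMeasurable (hv.aestronglyMeasurable.const_mul t)

theorem integrable_Gfun_mul (hε : 0 ≤ ε) (hv : MemLp v 2 μ) (t : ℝ) :
    Integrable (fun x => Gfun β ε (t * v x)) μ :=
  (hv.integrable_sq.const_mul (|β| / 2 * t ^ 2)).mono' (aestronglyMeasurable_Gfun_mul hv t)
    (ae_of_all _ fun x => (abs_Gfun_le hε _).trans_eq (by ring))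

theorem hasDerivAt_integral_Gfun_mul (hε : 0 ≤ ε) (hv : MemLp v 2 μ) (t : ℝ) :
    HasDerivAt (fun s => ∫ x, Gfun β ε (s * v x) ∂μ) (∫ x, gfun β ε (t * v x) * v x ∂μ) t := by
  refine (hasDerivAt_integral_of_dominated_loc_of_deriv_le
    (bound := fun x => |β| * (|t| + 1) * v x ^ 2) (Metric.ball_mem_nhds t one_pos)
    (Eventually.of_forall (aestronglyMeasurable_Gfun_mul hv)) (integrable_Gfun_mul hε hv t)
    (((continuous_gfun β ε).comp_aestronglyMeasurable
      (hv.aestronglyMeasurable.const_mul t)).mul hv.aestronglyMeasurable)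
    (ae_of_all _ fun x s hs => ?_) (hv.integrable_sq.const_mul _)
    (ae_of_all _ fun x s _ => (hasDerivAt_Gfun β ε _).comp s (hasDerivAt_mul_const (v x)))).2
  have hs : |s| ≤ |t| + 1 := by
    have := abs_sub_abs_le_abs_sub s t
    rw [Metric.mem_ball, Real.dist_eq] at hs
    linarith
  rw [Real.norm_eq_abs, abs_mul]
  calc |gfun β ε (s * v x)| * |v x| ≤ |β| * |s * v x| * |v x| := by
        gcongr; exact abs_gfun_le hε _
    _ = |β| * |s| * v x ^ 2 := by rw [abs_mul, ← sq_abs (v x)]; ring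
    _ ≤ |β| * (|t| + 1) * v x ^ 2 := by gcongr

theorem tendsto_integral_Gfun_mul_div_sq {l : Filter ℝ} [l.IsCountablyGenerated] (hε : 0 ≤ ε)
    (hv : MemLp v 2 μ) {g : α → ℝ}
    (hg : ∀ x, Tendsto (fun t => Gfun β ε (t * v x) / t ^ 2) l (𝓝 (g x))) :
    Tendsto (fun t => (∫ x, Gfun β ε (t * v x) ∂μ) / t ^ 2) l (𝓝 (∫ x, g x ∂μ)) := by
  refine (tendsto_integral_filter_of_dominated_convergence (fun x => |β| / 2 * v x ^ 2)
    (Eventually.of_forall fun t => ?_)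
    (Eventually.of_forall fun t => ae_of_all _ fun x => abs_Gfun_mul_div_sq_le hε t (v x))
    (hv.integrable_sq.const_mul _) (ae_of_all _ hg)).congr fun t => integral_div _ _
  exact (((continuous_Gfun β ε).comp (continuous_const_mul t)).div_const _)
    |>.comp_aestronglyMeasurable hv.aestronglyMeasurable

end IntegralOfPrimitive

theorem exists_isMaxOn_Ici_of_tendsto_atBot {f : ℝ → ℝ} {a : ℝ} (hf : ContinuousOn f (Ici a))
    (hlim : Tendsto f atTop atBot) : ∃ b ∈ Ici a, IsMaxOn f (Ici a) b := by
  obtain ⟨T, hT⟩ := eventually_atTop.1 (hlim.eventually (eventually_le_atBot (f a)))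
  refine hf.exists_isMaxOn' isClosed_Ici self_mem_Ici ?_
  filter_upwards [inter_mem_inf (isCompact_Icc (a := a) (b := T)).compl_mem_cocompact
    (mem_principal_self (Ici a))] with x ⟨hx, hxa⟩
  exact hT x (not_lt.1 fun h => hx ⟨hxa, h.le⟩)

theorem exists_pos_isMaxOn_Ici_of_tendsto_div_sq {f : ℝ → ℝ} (hf : Continuous f) (hf0 : f 0 = 0)
    {a b : ℝ} (ha : 0 < a) (hb : b < 0)
    (hzero : Tendsto (fun t => f t / t ^ 2) (𝓝[>] 0) (𝓝 a))
    (htop : Tendsto (fun t => f t / t ^ 2) atTop (𝓝 b)) :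
    ∃ t > 0, IsMaxOn f (Ici 0) t := by
  have hbot : Tendsto f atTop atBot :=
    (htop.neg_mul_atTop hb (tendsto_pow_atTop two_ne_zero)).congr'
      ((eventually_ne_atTop 0).mono fun t ht => by field_simp)
  obtain ⟨t₀, ht₀, ht₀pos⟩ :=
    ((hzero.eventually (eventually_gt_nhds ha)).and self_mem_nhdsWithin).exists
  have hft₀ : 0 < f t₀ := by
    simpa [pow_pos ht₀pos] using ht₀
  obtain ⟨t, ht, hmax⟩ := exists_isMaxOn_Ici_of_tendsto_atBot hf.continuousOn hbot
  refine ⟨t, lt_of_le_of_ne ht ?_, hmax⟩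
  rintro rfl
  linarith [isMaxOn_iff.1 hmax t₀ (le_of_lt ht₀pos)]

section Functional

variable {Ω : Set (Euc N)} {β ε t : ℝ} {u v : Euc N → ℝ}

theorem l2sq_const_smul (Ω : Set (Euc N)) (c : ℝ) (v : Euc N → ℝ) :
    l2sq Ω (c • v) = c ^ 2 * l2sq Ω v := by
  simp only [l2sq, Pi.smul_apply, smul_eq_mul, mul_pow, integral_const_mul]

theorem ffun_smul (Ω : Set (Euc N)) (β ε t : ℝ) (v : Euc N → ℝ) :
    ffun Ω β ε (t • v) = t ^ 2 * dirE Ω v - 2 * ∫ x in Ω, Gfun β ε (t * v x) := by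
  rw [ffun, dirE_const_smul]
  rfl

theorem hasDerivAt_ffun_smul (hε : 0 ≤ ε) (hv : MemLp v 2 (volume.restrict Ω)) (t : ℝ) :
    HasDerivAt (fun s => ffun Ω β ε (s • v))
      (2 * t * dirE Ω v - 2 * ∫ x in Ω, gfun β ε (t * v x) * v x) t := by
  simp only [ffun_smul]
  exact (((hasDerivAt_pow 2 t).mul_const (dirE Ω v)).fun_sub
    ((hasDerivAt_integral_Gfun_mul hε hv t).const_mul 2)).congr_deriv (by norm_num)

theorem dirE_smul_eq_integral_of_isLocalMax (hε : 0 ≤ ε) (hv : MemLp v 2 (volume.restrict Ω))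
    (h : IsLocalMax (fun s => ffun Ω β ε (s • v)) t) :
    dirE Ω (t • v) = ∫ x in Ω, gfun β ε ((t • v) x) * (t • v) x := by
  have h0 := h.hasDerivAt_eq_zero (hasDerivAt_ffun_smul hε hv t)
  have hint : ∫ x in Ω, gfun β ε ((t • v) x) * (t • v) x
      = t * ∫ x in Ω, gfun β ε (t * v x) * v x := by
    rw [← integral_const_mul]
    exact integral_congr_ae (ae_of_all _ fun x => by simp only [Pi.smul_apply, smul_eq_mul]; ring)
  rw [dirE_const_smul, hint]
  linear_combination t / 2 * h0

theorem tendsto_ffun_smul_div_sq {l : Filter ℝ} [l.IsCountablyGenerated]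
    (hl : ∀ᶠ t in l, t ≠ 0) (hε : 0 ≤ ε) (hv : MemLp v 2 (volume.restrict Ω)) {g : Euc N → ℝ}
    (hg : ∀ x, Tendsto (fun t => Gfun β ε (t * v x) / t ^ 2) l (𝓝 (g x))) :
    Tendsto (fun t => ffun Ω β ε (t • v) / t ^ 2) l (𝓝 (dirE Ω v - 2 * ∫ x in Ω, g x)) := by
  refine (tendsto_const_nhds.sub
    ((tendsto_integral_Gfun_mul_div_sq hε hv hg).const_mul 2)).congr' (hl.mono fun t ht => ?_)
  show _ = ffun Ω β ε (t • v) / t ^ 2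
  rw [ffun_smul]
  field_simp

theorem tendsto_ffun_smul_div_sq_atTop (hε : 0 ≤ ε) (hv : MemLp v 2 (volume.restrict Ω))
    (hv0 : ∀ x, 0 ≤ v x) :
    Tendsto (fun t => ffun Ω β ε (t • v) / t ^ 2) atTop (𝓝 (dirE Ω v - β * l2sq Ω v)) := by
  convert tendsto_ffun_smul_div_sq (eventually_ne_atTop 0) hε hv
    fun x => tendsto_Gfun_mul_div_sq_atTop (hv0 x) using 2
  rw [integral_const_mul, l2sq]
  ring

theorem tendsto_ffun_smul_div_sq_nhdsNE (hε : 0 < ε) (hv : MemLp v 2 (volume.restrict Ω)) :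
    Tendsto (fun t => ffun Ω β ε (t • v) / t ^ 2) (𝓝[≠] 0) (𝓝 (dirE Ω v)) := by
  convert tendsto_ffun_smul_div_sq (l := 𝓝[≠] 0) (β := β) self_mem_nhdsWithin hε.le hv
    (g := 0) fun x => tendsto_const_nhds.congr' <| nhdsWithin_le_nhds <|
      (Gfun_mul_eventually_eq_zero (β := β) hε (v x)).mono fun t ht => by simp [ht]
  simp

theorem ffun_eq_ffun_pPart_add_dirE_nPart (hε : 0 ≤ ε) (hp : MemH10 Ω (pPart v))
    (hn : MemH10 Ω (nPart v)) : ffun Ω β ε v = ffun Ω β ε (pPart v) + dirE Ω (nPart v) := by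
  have hG : ∀ x, Gfun β ε (pPart v x) = Gfun β ε (v x) := fun x => Gfun_max_zero hε (v x)
  rw [ffun, ffun, dirE_eq_dirE_pPart_add_dirE_nPart hp hn]
  simp only [hG]
  ring

theorem pPart_neg_nPart_add_smul_pPart (u : Euc N → ℝ) (ht : 0 ≤ t) :
    pPart (-nPart u + t • pPart u) = t • pPart u := by
  ext x
  rcases le_total (u x) 0 with h | h
  · simp [pPart, nPart, h]
  · simp [pPart, nPart, h, mul_nonneg ht h]

theorem nPart_neg_nPart_add_smul_pPart (u : Euc N → ℝ) (ht : 0 ≤ t) :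
    nPart (-nPart u + t • pPart u) = nPart u := by
  ext x
  rcases le_total (u x) 0 with h | h
  · simp [pPart, nPart, h]
  · simp [pPart, nPart, h, mul_nonneg ht h]

theorem ffun_neg_nPart_add_smul_pPart (hε : 0 ≤ ε) (hu : MemH10 Ω u) (ht : 0 ≤ t) :
    ffun Ω β ε (-nPart u + t • pPart u) = ffun Ω β ε (t • pPart u) + dirE Ω (nPart u) := by
  have hp := pPart_neg_nPart_add_smul_pPart u ht
  have hn := nPart_neg_nPart_add_smul_pPart u ht
  rw [ffun_eq_ffun_pPart_add_dirE_nPart hε (by rw [hp]; exact hu.pPart.const_smul t)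
    (by rw [hn]; exact hu.nPart), hp, hn]

theorem neg_nPart_add_smul_pPart_mem_Mset (hu : MemH10 Ω u) (hp : l2sq Ω (pPart u) ≠ 0)
    (hn : l2sq Ω (nPart u) = 1) (ht : 0 < t)
    (hcrit : dirE Ω (t • pPart u) = ∫ x in Ω, gfun β ε ((t • pPart u) x) * (t • pPart u) x) :
    -nPart u + t • pPart u ∈ Mset Ω β ε := by
  have hp' := pPart_neg_nPart_add_smul_pPart u ht.le
  have hn' := nPart_neg_nPart_add_smul_pPart u ht.le
  have hmem : MemH10 Ω (-nPart u + t • pPart u) := memH10_of_pPart_of_nPart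
    (by rw [hp']; exact hu.pPart.const_smul t) (by rw [hn']; exact hu.nPart)
  refine ⟨hmem, by rw [hn']; exact hn, ?_, by rw [hp']; exact hcrit⟩
  rw [hp']
  exact nontriv_of_l2sq_ne_zero (by
    rw [l2sq_const_smul]; exact mul_ne_zero (pow_ne_zero 2 ht.ne') hp)

end Functional

namespace IsFirstEigen

variable {Ω : Set (Euc N)} {lam1 : ℝ} {e1 : Euc N → ℝ}

theorem dirE_eq (heig : IsFirstEigen Ω lam1 e1) : dirE Ω e1 = lam1 := by
  obtain ⟨he1, -, hl2, heigf, -⟩ := heig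
  have h := heigf e1 he1
  simp only [real_inner_self_eq_norm_sq, ← sq] at h
  rw [dirE, h, ← l2sq, hl2, mul_one]

theorem ne_zero_of_dirE_eq_zero (heig : IsFirstEigen Ω lam1 e1) {v : Euc N → ℝ}
    (hv : MemH10 Ω v) (hv0 : l2sq Ω v ≠ 0) (h : dirE Ω v = 0) {x : Euc N} (hx : x ∈ Ω) :
    v x ≠ 0 := by
  have hlam1 : 0 ≤ lam1 := heig.dirE_eq ▸ dirE_nonneg Ω e1
  obtain ⟨-, he1_pos, -, -, hmin, hsimple⟩ := heig
  have hlam : lam1 = 0 := by nlinarith [hmin v hv, (l2sq_nonneg Ω v).lt_of_ne' hv0]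
  obtain ⟨c, rfl⟩ := hsimple v hv (by rw [h, hlam, zero_mul])
  have hc : c ≠ 0 := by
    rintro rfl
    simp [l2sq] at hv0
  exact mul_ne_zero hc (he1_pos x hx).ne'

theorem dirE_pPart_pos (heig : IsFirstEigen Ω lam1 e1) {u : Euc N → ℝ} (hu : MemH10 Ω u)
    (hp : l2sq Ω (pPart u) ≠ 0) (hn : l2sq Ω (nPart u) ≠ 0) : 0 < dirE Ω (pPart u) := by
  refine (dirE_nonneg Ω _).lt_of_ne fun h => hn (setIntegral_eq_zero_of_forall_eq_zero
    fun x hx => ?_)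
  have hpos : 0 < u x := by
    by_contra hle
    exact heig.ne_zero_of_dirE_eq_zero hu.pPart hp h.symm hx (max_eq_right (not_lt.1 hle))
  simp [nPart, hpos.le]

end IsFirstEigen

theorem stmt5_general {N : ℕ} (Ω : Set (Euc N))
    (lam1 : ℝ) (e1 : Euc N → ℝ) (heig : IsFirstEigen Ω lam1 e1)
    (β ε : ℝ) (hε : 0 < ε)
    (u : Euc N → ℝ) (hu : MemH10 Ω u)
    (hp : l2sq Ω (pPart u) = 1) (hn : l2sq Ω (nPart u) = 1)
    (hd : dirE Ω (pPart u) < β) :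
    Tendsto (fun t : ℝ => ffun Ω β ε (t • pPart u) / t ^ 2) atTop
        (𝓝 (dirE Ω (pPart u) - β * l2sq Ω (pPart u))) ∧
      dirE Ω (pPart u) - β * l2sq Ω (pPart u) < 0 ∧
      Tendsto (fun t : ℝ => ffun Ω β ε (t • pPart u) / t ^ 2) (𝓝[>] (0 : ℝ))
        (𝓝 (dirE Ω (pPart u))) ∧
      0 < dirE Ω (pPart u) ∧
      ∃ tb : ℝ, 0 < tb ∧
        (∀ t : ℝ, 0 ≤ t →
          ffun Ω β ε (-nPart u + t • pPart u) ≤ ffun Ω β ε (-nPart u + tb • pPart u)) ∧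
        (-nPart u + tb • pPart u) ∈ Mset Ω β ε := by
  have hp2 : MemLp (pPart u) 2 (volume.restrict Ω) := hu.pPart.2.1
  have hp0 : l2sq Ω (pPart u) ≠ 0 := by rw [hp]; exact one_ne_zero
  have hpos := heig.dirE_pPart_pos hu hp0 (by rw [hn]; exact one_ne_zero)
  have hneg : dirE Ω (pPart u) - β * l2sq Ω (pPart u) < 0 := by rw [hp]; linarith
  have htop := tendsto_ffun_smul_div_sq_atTop (β := β) hε.le hp2 (pPart_nonneg u)
  have hzero := (tendsto_ffun_smul_div_sq_nhdsNE (β := β) hε hp2).mono_left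
    (nhdsWithin_mono _ fun t (ht : 0 < t) => ht.ne')
  obtain ⟨tb, htb, hmax⟩ := exists_pos_isMaxOn_Ici_of_tendsto_div_sq
    (continuous_iff_continuousAt.2 fun t => (hasDerivAt_ffun_smul hε.le hp2 t).continuousAt)
    (by simpa [Gfun_eq_zero hε.le] using ffun_smul Ω β ε 0 (pPart u)) hpos hneg hzero htop
  refine ⟨htop, hneg, hzero, hpos, tb, htb, fun t ht => ?_, ?_⟩
  · rw [ffun_neg_nPart_add_smul_pPart hε.le hu ht, ffun_neg_nPart_add_smul_pPart hε.le hu htb.le]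
    linarith [isMaxOn_iff.1 hmax t ht]
  · exact neg_nPart_add_smul_pPart_mem_Mset hu hp0 hn htb
      (dirE_smul_eq_integral_of_isLocalMax hε.le hp2 (hmax.isLocalMax (Ici_mem_nhds htb)))

theorem stmt5 {N : ℕ} (hN : 1 ≤ N) (Ω : Set (Euc N)) (hΩo : IsOpen Ω)
    (hΩb : Bornology.IsBounded Ω) (hΩc : IsConnected Ω)
    (lam1 : ℝ) (e1 : Euc N → ℝ) (heig : IsFirstEigen Ω lam1 e1)
    (β ε : ℝ) (hβ : lam1 < β) (hε : 0 < ε)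
    (u : Euc N → ℝ) (hu : MemH10 Ω u)
    (hp : l2sq Ω (pPart u) = 1) (hn : l2sq Ω (nPart u) = 1)
    (hd : dirE Ω (pPart u) < β) :
    Tendsto (fun t : ℝ => ffun Ω β ε (t • pPart u) / t ^ 2) atTop
        (𝓝 (dirE Ω (pPart u) - β * l2sq Ω (pPart u))) ∧
      dirE Ω (pPart u) - β * l2sq Ω (pPart u) < 0 ∧
      Tendsto (fun t : ℝ => ffun Ω β ε (t • pPart u) / t ^ 2) (𝓝[>] (0 : ℝ))
        (𝓝 (dirE Ω (pPart u))) ∧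
      0 < dirE Ω (pPart u) ∧
      ∃ tb : ℝ, 0 < tb ∧
        (∀ t : ℝ, 0 ≤ t →
          ffun Ω β ε (-nPart u + t • pPart u) ≤ ffun Ω β ε (-nPart u + tb • pPart u)) ∧
        (-nPart u + tb • pPart u) ∈ Mset Ω β ε :=
  stmt5_general Ω lam1 e1 heig β ε hε u hu hp hn hd

end
end

section
/- For every positive integer k there exists b̃_k > 0 such that α_β < α_{k,β} for all β > b̃_k; i.e., the first nontrivial curve of Σ lies strictly below each of the curves (α_{k,β}, β) for β large. -/
open MeasureTheory Filter Set
open scoped RealInnerProductSpace ENNReal Topology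

noncomputable section

variable {N : ℕ}

theorem Filter.Tendsto.eventually_lt_of_mul_sub {ι : Type*} {F : Filter ι} {w f g : ι → ℝ}
    {l c : ℝ} (hc : 0 < c) (hw : ∀ᶠ x in F, 0 ≤ w x)
    (hf : Tendsto (fun x => w x * (f x - l)) F (𝓝 c))
    (hg : Tendsto (fun x => w x * (g x - l)) F (𝓝 0)) :
    ∀ᶠ x in F, g x < f x := by
  have hgap : Tendsto (fun x => w x * (f x - g x)) F (𝓝 c) := by
    simpa only [sub_zero, ← mul_sub, sub_sub_sub_cancel_right] using hf.sub hg
  filter_upwards [hw, hgap.eventually (eventually_gt_nhds hc)] with x hwx hpos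
  exact sub_pos.mp (pos_of_mul_pos_right hpos hwx)

theorem stmt19_general {N : ℕ} (hN : 2 ≤ N) (Ω : Set (Euc N)) (lam1 : ℝ)
    (C : ℝ) (hC : 0 < C) (ak : ℕ → ℝ → ℝ)
    (hak3 : 3 ≤ N → ∀ k : ℕ, 1 ≤ k →
      Tendsto (fun β : ℝ => β ^ (((N : ℝ) - 2) / 2) * (ak k β - lam1)) atTop
        (𝓝 (C * k)))
    (hak2 : N = 2 → ∀ k : ℕ, 1 ≤ k →
      Tendsto (fun β : ℝ => Real.log β * (ak k β - lam1)) atTop (𝓝 (C * k)))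
    (ha3 : 3 ≤ N →
      Tendsto (fun β : ℝ => β ^ (((N : ℝ) - 2) / 2) * (alphaB Ω β - lam1)) atTop
        (𝓝 0))
    (ha2 : N = 2 →
      Tendsto (fun β : ℝ => Real.log β * (alphaB Ω β - lam1)) atTop (𝓝 0)) :
    ∀ k : ℕ, 1 ≤ k → ∃ bt : ℝ, ∀ β : ℝ, bt < β → alphaB Ω β < ak k β := by
  intro k hk
  have hCk : 0 < C * k := mul_pos hC (by exact_mod_cast hk)
  suffices h : ∀ᶠ β in atTop, alphaB Ω β < ak k β by
    obtain ⟨bt, hbt⟩ := h.exists_forall_of_atTop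
    exact ⟨bt, fun β hβ => hbt β hβ.le⟩
  rcases hN.eq_or_lt with hN2 | hN3
  · have hlog : ∀ᶠ β : ℝ in atTop, 0 ≤ Real.log β :=
      (eventually_ge_atTop 1).mono fun β hβ => Real.log_nonneg hβ
    exact (hak2 hN2.symm k hk).eventually_lt_of_mul_sub hCk hlog (ha2 hN2.symm)
  · have hpow : ∀ᶠ β : ℝ in atTop, 0 ≤ β ^ (((N : ℝ) - 2) / 2) :=
      (eventually_ge_atTop 0).mono fun β hβ => Real.rpow_nonneg hβ _
    exact (hak3 hN3 k hk).eventually_lt_of_mul_sub hCk hpow (ha3 hN3)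

theorem stmt19 {N : ℕ} (hN : 2 ≤ N) (Ω : Set (Euc N)) (hΩo : IsOpen Ω)
    (hΩb : Bornology.IsBounded Ω) (hΩc : IsConnected Ω)
    (lam1 : ℝ) (e1 : Euc N → ℝ) (heig : IsFirstEigen Ω lam1 e1)
    (C : ℝ) (hC : 0 < C) (b : ℕ → ℝ) (ak : ℕ → ℝ → ℝ)
    (hcurve : ∀ k : ℕ, 1 ≤ k → ∀ β : ℝ, b k < β → (ak k β, β) ∈ fucik Ω)
    (hak3 : 3 ≤ N → ∀ k : ℕ, 1 ≤ k →
      Tendsto (fun β : ℝ => β ^ (((N : ℝ) - 2) / 2) * (ak k β - lam1)) atTop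
        (𝓝 (C * k)))
    (hak2 : N = 2 → ∀ k : ℕ, 1 ≤ k →
      Tendsto (fun β : ℝ => Real.log β * (ak k β - lam1)) atTop (𝓝 (C * k)))
    (ha3 : 3 ≤ N →
      Tendsto (fun β : ℝ => β ^ (((N : ℝ) - 2) / 2) * (alphaB Ω β - lam1)) atTop
        (𝓝 0))
    (ha2 : N = 2 →
      Tendsto (fun β : ℝ => Real.log β * (alphaB Ω β - lam1)) atTop (𝓝 0)) :
    ∀ k : ℕ, 1 ≤ k → ∃ bt : ℝ, ∀ β : ℝ, bt < β → alphaB Ω β < ak k β :=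
  stmt19_general hN Ω lam1 C hC ak hak3 hak2 ha3 ha2

end
end
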